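/- Every extension of a sofic group by an amenable group is sofic: if N ⊴ G is sofic and G/N is amenable, then G is sofic. -/

import Mathlib

/-- Normalized Hamming distance on the symmetric group of a finite set. -/
noncomputable def hamDist {F : Type*} [Fintype F] (α β : Equiv.Perm F) : ℝ :=
  (Nat.card {f : F // α f ≠ β f} : ℝ) / (Fintype.card F : ℝ)

/-- A group is sofic if every finite subset admits `(K,ε)`-approximations into
finite symmetric groups with the normalized Hamming distance. -/
def IsSofic (G : Type*) [Group G] : Prop :=
  ∀ (K : Finset G) (ε : ℝ), 0 < ε →
    ∃ (F : Type) (_ : Fintype F) (_ : Nonempty F) (φ : G → Equiv.Perm F),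
      (∀ k₁ ∈ K, ∀ k₂ ∈ K, hamDist (φ (k₁ * k₂)) (φ k₁ * φ k₂) ≤ ε) ∧
      (∀ k₁ ∈ K, ∀ k₂ ∈ K, k₁ ≠ k₂ → 1 - ε ≤ hamDist (φ k₁) (φ k₂))

/-- Amenability via Følner sets: for every finite `S ⊆ G` and `ε > 0` there is a
nonempty finite `F ⊆ G` with `|F \ sF| < ε|F|` for all `s ∈ S`. -/
def IsAmenableFolner (G : Type*) [Group G] [DecidableEq G] : Prop :=
  ∀ (S : Finset G) (ε : ℝ), 0 < ε →
    ∃ F : Finset G, F.Nonempty ∧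
      ∀ s ∈ S, ((F \ F.image (s * ·)).card : ℝ) < ε * F.card

/-!
Choose a set-theoretic section `q ↦ q.out` of `G → Q = G ⧸ N` and its cocycle
`c(g, q) = (g q).out⁻¹ * g * q.out ∈ N`, which satisfies `c(g h, q) = c(g, h q) * c(h, q)`.
Given a Følner set `F ⊆ Q` and a sofic approximation `ψ` of `N` on a finite set `E` that is good
on the finitely many relevant cocycle values, let `g` act on `F × E` by the skew product
`(q, e) ↦ (g q, ψ (c(g, q)) e)`, where `g q` is replaced by an arbitrary point of `F` when it
leaves `F`. The Følner condition makes the points where this happens a negligible proportion,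
and on all the others the cocycle identity turns almost-multiplicativity of `ψ` into that of the
skew product. Two distinct elements are separated either by their first coordinates (different
cosets) or, within a coset, by distinct cocycle values, which `ψ` separates.
-/

open Finset Equiv Pointwise

lemma prodShear_mul_prodShear {X E : Type*} (σ σ' : Perm X) (τ τ' : X → Perm E) :
    (prodShear σ τ : Perm (X × E)) * prodShear σ' τ' =
      prodShear (σ * σ') fun q => τ (σ' q) * τ' q := by
  ext ⟨q, e⟩ <;> rfl

section HammingDistance

variable {X E : Type*} [Fintype X] [Fintype E]

lemma hamDist_nonneg (α β : Perm X) : 0 ≤ hamDist α β := by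
  unfold hamDist; positivity

lemma hamDist_le_one (α β : Perm X) : hamDist α β ≤ 1 := by
  unfold hamDist
  rw [← Nat.card_eq_fintype_card]
  exact div_le_one_of_le₀ (by exact_mod_cast Finite.card_subtype_le _) (by positivity)

lemma hamDist_permCongr {Y : Type*} [Fintype Y] (e : X ≃ Y) (α β : Perm X) :
    hamDist (e.permCongr α) (e.permCongr β) = hamDist α β := by
  unfold hamDist
  rw [Fintype.card_congr e, Nat.card_congr (e.subtypeEquiv fun x => ?_)]
  simp [permCongr_apply]

lemma hamDist_prodShear [DecidableEq X] [Nonempty E] (σ σ' : Perm X) (τ τ' : X → Perm E) :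
    hamDist (prodShear σ τ : Perm (X × E)) (prodShear σ' τ') =
      (∑ q, if σ q = σ' q then hamDist (τ q) (τ' q) else 1) / Fintype.card X := by
  classical
  have hE : (0 : ℝ) < Fintype.card E := by exact_mod_cast Fintype.card_pos
  have fiber (q : X) : ((univ.filter fun e => (σ q, τ q e) ≠ (σ' q, τ' q e)).card : ℝ) =
      Fintype.card E * if σ q = σ' q then hamDist (τ q) (τ' q) else 1 := by
    split_ifs with h
    · simp [h, hamDist, Nat.card_eq_fintype_card, Fintype.card_subtype, mul_div_cancel₀ _ hE.ne']
    · simp [h]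
  conv_lhs => simp only [hamDist, Nat.card_eq_fintype_card, Fintype.card_subtype,
    Fintype.card_prod, prodShear_apply]
  rw [card_filter, Fintype.sum_prod_type]
  simp only [← card_filter]
  push_cast
  simp only [fiber, ← mul_sum]
  rw [mul_comm (Fintype.card X : ℝ), mul_div_mul_left _ _ hE.ne']

end HammingDistance

section Averages

variable {X : Type*} [Fintype X] (f : X → ℝ) (B : Finset X) {δ : ℝ}

lemma sum_div_card_le_of_le_off (hδ : 0 ≤ δ) (hf : ∀ q, f q ≤ 1) (hgood : ∀ q ∉ B, f q ≤ δ) :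
    (∑ q, f q) / Fintype.card X ≤ δ + #B / Fintype.card X := by
  classical
  have hpt (q : X) : f q ≤ δ + if q ∈ B then 1 else 0 := by
    split_ifs with hq
    · linarith [hf q]
    · simpa using hgood q hq
  have hsum : ∑ q, f q ≤ δ * Fintype.card X + #B := by
    calc ∑ q, f q ≤ ∑ q, (δ + if q ∈ B then (1 : ℝ) else 0) := sum_le_sum fun q _ => hpt q
      _ = δ * Fintype.card X + #B := by simp [sum_add_distrib, mul_comm]
  rcases (Fintype.card X).eq_zero_or_pos with hX | hX
  · simp [hX, hδ]
  · rw [div_le_iff₀ (by exact_mod_cast hX), add_mul, div_mul_cancel₀ _ (by positivity)]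
    linarith

lemma le_sum_div_card_of_le_off [Nonempty X] (hδ : 0 ≤ δ) (hf : ∀ q, 0 ≤ f q)
    (hgood : ∀ q ∉ B, 1 - δ ≤ f q) :
    1 - δ - #B / Fintype.card X ≤ (∑ q, f q) / Fintype.card X := by
  classical
  have hpt (q : X) : 1 - δ - (if q ∈ B then 1 else 0) ≤ f q := by
    split_ifs with hq
    · linarith [hf q]
    · simpa using hgood q hq
  have hsum : (1 - δ) * Fintype.card X - #B ≤ ∑ q, f q := by
    calc (1 - δ) * Fintype.card X - #B = ∑ q, (1 - δ - if q ∈ B then (1 : ℝ) else 0) := by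
          simp [sum_sub_distrib]; ring
      _ ≤ ∑ q, f q := sum_le_sum fun q _ => hpt q
  have hX : (0 : ℝ) < Fintype.card X := by exact_mod_cast Fintype.card_pos
  rw [le_div_iff₀ hX, sub_mul, div_mul_cancel₀ _ hX.ne']
  linarith

end Averages

lemma isSofic_of_forall_exists_approx {G : Type*} [Group G]
    (h : ∀ (K : Finset G) (ε : ℝ), 0 < ε →
      ∃ (F : Type*) (_ : Fintype F) (_ : Nonempty F) (φ : G → Perm F),
        (∀ k₁ ∈ K, ∀ k₂ ∈ K, hamDist (φ (k₁ * k₂)) (φ k₁ * φ k₂) ≤ ε) ∧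
        (∀ k₁ ∈ K, ∀ k₂ ∈ K, k₁ ≠ k₂ → 1 - ε ≤ hamDist (φ k₁) (φ k₂))) :
    IsSofic G := by
  intro K ε hε
  obtain ⟨F, _, _, φ, hmul, hsep⟩ := h K ε hε
  let e := Fintype.equivFin F
  refine ⟨Fin (Fintype.card F), inferInstance, ⟨e (Classical.arbitrary F)⟩,
    fun g => e.permCongr (φ g), fun k₁ hk₁ k₂ hk₂ => ?_, fun k₁ hk₁ k₂ hk₂ hne => ?_⟩
  · rw [← permCongr_mul, hamDist_permCongr]
    exact hmul k₁ hk₁ k₂ hk₂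
  · rw [hamDist_permCongr]
    exact hsep k₁ hk₁ k₂ hk₂ hne

namespace Finset

variable {Q : Type*} [Group Q] [DecidableEq Q] (F : Finset Q)

noncomputable def mulLeftPerm (g : Q) : Perm F :=
  extendSubtype (p := fun q : F => g * ↑q ∈ F) (q := fun q : F => g⁻¹ * ↑q ∈ F)
    { toFun := fun q => ⟨⟨g * q.1, q.2⟩, by simp⟩
      invFun := fun q => ⟨⟨g⁻¹ * q.1, q.2⟩, by simp⟩
      left_inv := fun q => by ext; simp
      right_inv := fun q => by ext; simp }

lemma mulLeftPerm_apply {g : Q} {q : F} (hq : g * ↑q ∈ F) : F.mulLeftPerm g q = ⟨g * q, hq⟩ := by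
  rw [mulLeftPerm, extendSubtype_apply_of_mem _ q hq]
  rfl

lemma card_filter_mul_notMem (s : Q) :
    #(univ.filter fun q : F => s * ↑q ∉ F) = #(F \ F.image (s * ·)) := by
  have hfilter : #(univ.filter fun q : F => s * ↑q ∉ F) = #(F.filter fun q => s * q ∉ F) := by
    simp only [card_filter]
    exact sum_coe_sort F fun q => if s * q ∉ F then 1 else 0
  have himage : (F.filter fun q => s * q ∉ F).image (s * ·) = F.image (s * ·) \ F := by
    ext; simp [and_comm]
  rw [hfilter, ← card_image_of_injective _ (mul_right_injective s), himage,
    card_sdiff_comm (card_image_of_injective _ (mul_right_injective s))]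

end Finset

section Extension

variable {G : Type*} [Group G] (N : Subgroup G) [N.Normal]

noncomputable def outCocycle (g : G) (q : G ⧸ N) : N :=
  ⟨((g : G ⧸ N) * q).out⁻¹ * (g * q.out), by
    rw [← QuotientGroup.eq_one_iff]
    simp⟩

lemma outCocycle_mul (g h : G) (q : G ⧸ N) :
    outCocycle N (g * h) q = outCocycle N g (h * q) * outCocycle N h q := by
  ext
  simp only [outCocycle, Subgroup.coe_mul, QuotientGroup.mk_mul, mul_assoc]
  group

lemma eq_of_outCocycle_eq {g₁ g₂ : G} {q : G ⧸ N} (hmk : (g₁ : G ⧸ N) = g₂)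
    (h : outCocycle N g₁ q = outCocycle N g₂ q) : g₁ = g₂ := by
  have h' := congrArg Subtype.val h
  simp only [outCocycle, hmk] at h'
  exact mul_right_cancel (mul_left_cancel h')

variable [DecidableEq (G ⧸ N)] {E : Type*}

noncomputable def extensionPerm (F : Finset (G ⧸ N)) (ψ : N → Perm E) (g : G) : Perm (F × E) :=
  prodShear (F.mulLeftPerm g) fun q => ψ (outCocycle N g q)

variable [Fintype E] [Nonempty E] (F : Finset (G ⧸ N)) (ψ : N → Perm E) {L : Finset N} {δ : ℝ}
  {k₁ k₂ : G}

lemma hamDist_extensionPerm_mul_le (hδ : 0 ≤ δ)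
    (hψ : ∀ a ∈ L, ∀ b ∈ L, hamDist (ψ (a * b)) (ψ a * ψ b) ≤ δ)
    (hk₁ : ∀ q ∈ F, outCocycle N k₁ q ∈ L) (hk₂ : ∀ q ∈ F, outCocycle N k₂ q ∈ L) :
    hamDist (extensionPerm N F ψ (k₁ * k₂)) (extensionPerm N F ψ k₁ * extensionPerm N F ψ k₂) ≤
      δ + (#(F \ F.image ((k₂ : G ⧸ N) * ·)) +
        #(F \ F.image (((k₁ * k₂ : G) : G ⧸ N) * ·))) / #F := by
  set B := (univ.filter fun q : F => (k₂ : G ⧸ N) * q ∉ F) ∪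
    (univ.filter fun q : F => ((k₁ * k₂ : G) : G ⧸ N) * q ∉ F)
  have hB : (#B : ℝ) ≤ #(F \ F.image ((k₂ : G ⧸ N) * ·)) +
      #(F \ F.image (((k₁ * k₂ : G) : G ⧸ N) * ·)) := by
    rw [← card_filter_mul_notMem, ← card_filter_mul_notMem]
    exact_mod_cast card_union_le _ _
  have hgood (q : F) (hq : q ∉ B) :
      (if (F.mulLeftPerm (k₁ * k₂ : G)) q = (F.mulLeftPerm k₁ * F.mulLeftPerm k₂) q then
        hamDist (ψ (outCocycle N (k₁ * k₂) q))
          (ψ (outCocycle N k₁ (F.mulLeftPerm k₂ q)) * ψ (outCocycle N k₂ q)) else 1) ≤ δ := by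
    simp only [B, mem_union, mem_filter, mem_univ, true_and, not_or, not_not] at hq
    obtain ⟨h₂, h₁₂⟩ := hq
    have h₁ : (k₁ : G ⧸ N) * ((k₂ : G ⧸ N) * q) ∈ F := by rwa [← mul_assoc, ← QuotientGroup.mk_mul]
    rw [Perm.mul_apply, mulLeftPerm_apply F h₂, mulLeftPerm_apply F h₁₂, mulLeftPerm_apply F h₁,
      if_pos (by simp [mul_assoc]), outCocycle_mul]
    exact hψ _ (hk₁ _ h₂) _ (hk₂ q q.2)
  rw [extensionPerm, extensionPerm, extensionPerm, prodShear_mul_prodShear, hamDist_prodShear]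
  calc _ ≤ δ + #B / Fintype.card F :=
        sum_div_card_le_of_le_off _ B hδ (fun q => by split_ifs <;> simp [hamDist_le_one]) hgood
    _ ≤ _ := by
        rw [Fintype.card_coe]
        gcongr

lemma one_sub_le_hamDist_extensionPerm (hF : F.Nonempty) (hδ : 0 ≤ δ)
    (hψ : ∀ a ∈ L, ∀ b ∈ L, a ≠ b → 1 - δ ≤ hamDist (ψ a) (ψ b))
    (hk₁ : ∀ q ∈ F, outCocycle N k₁ q ∈ L) (hk₂ : ∀ q ∈ F, outCocycle N k₂ q ∈ L)
    (hne : k₁ ≠ k₂) :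
    1 - δ - (#(F \ F.image ((k₁ : G ⧸ N) * ·)) + #(F \ F.image ((k₂ : G ⧸ N) * ·))) / #F ≤
      hamDist (extensionPerm N F ψ k₁) (extensionPerm N F ψ k₂) := by
  have := hF.to_subtype
  set B := (univ.filter fun q : F => (k₁ : G ⧸ N) * q ∉ F) ∪
    (univ.filter fun q : F => (k₂ : G ⧸ N) * q ∉ F)
  have hB : (#B : ℝ) ≤ #(F \ F.image ((k₁ : G ⧸ N) * ·)) +
      #(F \ F.image ((k₂ : G ⧸ N) * ·)) := by
    rw [← card_filter_mul_notMem, ← card_filter_mul_notMem]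
    exact_mod_cast card_union_le _ _
  have hgood (q : F) (hq : q ∉ B) :
      1 - δ ≤ if F.mulLeftPerm k₁ q = F.mulLeftPerm k₂ q then
        hamDist (ψ (outCocycle N k₁ q)) (ψ (outCocycle N k₂ q)) else 1 := by
    simp only [B, mem_union, mem_filter, mem_univ, true_and, not_or, not_not] at hq
    obtain ⟨h₁, h₂⟩ := hq
    split_ifs with hσ
    · rw [mulLeftPerm_apply F h₁, mulLeftPerm_apply F h₂, Subtype.mk.injEq] at hσ
      exact hψ _ (hk₁ q q.2) _ (hk₂ q q.2) fun h =>
        hne (eq_of_outCocycle_eq N (mul_right_cancel hσ) h)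
    · linarith
  rw [extensionPerm, extensionPerm, hamDist_prodShear]
  calc _ ≤ 1 - δ - #B / Fintype.card F := by
        rw [Fintype.card_coe]
        gcongr
    _ ≤ _ := le_sum_div_card_of_le_off _ B hδ
        (fun q => by split_ifs <;> simp [hamDist_nonneg]) hgood

end Extension

/-- Elek–Szabó: an extension of a sofic group by an amenable group is sofic. -/
theorem sofic_by_amenable {G : Type*} [Group G] [DecidableEq G]
    (N : Subgroup G) [N.Normal] [DecidableEq (G ⧸ N)]
    (hN : IsSofic N) (hQ : IsAmenableFolner (G ⧸ N)) : IsSofic G := by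
  refine isSofic_of_forall_exists_approx fun K ε hε => ?_
  obtain ⟨F, hF, hFolner⟩ := hQ ((K ∪ K * K).image (↑)) (ε / 4) (by positivity)
  have hbad {s : G} (hs : s ∈ K ∪ K * K) : (#(F \ F.image ((s : G ⧸ N) * ·)) : ℝ) / #F ≤ ε / 4 :=
    (div_le_iff₀ (by exact_mod_cast hF.card_pos)).2 (hFolner _ (mem_image_of_mem _ hs)).le
  have hK {k : G} (hk : k ∈ K) : k ∈ K ∪ K * K := mem_union_left _ hk
  set L := (K ×ˢ F).image fun p => outCocycle N p.1 p.2
  have hL {k : G} (hk : k ∈ K) (q : G ⧸ N) (hq : q ∈ F) : outCocycle N k q ∈ L :=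
    mem_image.2 ⟨(k, q), mem_product.2 ⟨hk, hq⟩, rfl⟩
  obtain ⟨E, _, _, ψ, hψmul, hψsep⟩ := hN L (ε / 2) (by positivity)
  have := hF.to_subtype
  refine ⟨F × E, inferInstance, inferInstance, extensionPerm N F ψ,
    fun k₁ hk₁ k₂ hk₂ => ?_, fun k₁ hk₁ k₂ hk₂ hne => ?_⟩
  · refine (hamDist_extensionPerm_mul_le N F ψ (by positivity) hψmul (hL hk₁) (hL hk₂)).trans ?_
    linarith [add_div (#(F \ F.image ((k₂ : G ⧸ N) * ·)) : ℝ)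
      #(F \ F.image (((k₁ * k₂ : G) : G ⧸ N) * ·)) #F,
      hbad (hK hk₂), hbad (mem_union_right _ (mul_mem_mul hk₁ hk₂))]
  · refine le_trans ?_ (one_sub_le_hamDist_extensionPerm N F ψ hF (by positivity) hψsep
      (hL hk₁) (hL hk₂) hne)
    linarith [add_div (#(F \ F.image ((k₁ : G ⧸ N) * ·)) : ℝ) #(F \ F.image ((k₂ : G ⧸ N) * ·)) #F,
      hbad (hK hk₁), hbad (hK hk₂)]
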